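/- Let A be a commutative ring, n ≥ 1 an integer, F, a ∈ A, and ζ ∈ A an element with ζ^n = 1 and ζ invertible. Let B := A[u, v]/(uv − F, u^n + v^n − 2a). Then there exist (unique) A-algebra automorphisms σ and τ of B with σ(u) = ζ·u, σ(v) = ζ⁻¹·v, τ(u) = v, τ(v) = u, and they satisfy the dihedral relations σ^n = id, τ² = id, and (σ ∘ τ)² = id; in particular σ and τ generate an action of the dihedral group D_n on B by A-algebra automorphisms. -/

import Mathlib

noncomputable section

/-- The ideal `(uv − F, uⁿ + vⁿ − 2a)` in `A[u, v]`. -/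
def dihedralIdeal (A : Type) [CommRing A] (n : ℕ) (F a : A) :
    Ideal (MvPolynomial (Fin 2) A) :=
  Ideal.span {MvPolynomial.X 0 * MvPolynomial.X 1 - MvPolynomial.C F,
    MvPolynomial.X 0 ^ n + MvPolynomial.X 1 ^ n - MvPolynomial.C (2 * a)}

/-- The ring `B = A[u, v]/(uv − F, uⁿ + vⁿ − 2a)`, the coordinate ring of the simple
dihedral cover of `Spec A` determined by the data `F` and `a`. -/
abbrev DihedralCoverRing (A : Type) [CommRing A] (n : ℕ) (F a : A) : Type :=
  MvPolynomial (Fin 2) A ⧸ dihedralIdeal A n F a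

/-- The image `u` of the first variable in `B`. -/
def uElt (A : Type) [CommRing A] (n : ℕ) (F a : A) : DihedralCoverRing A n F a :=
  Ideal.Quotient.mk _ (MvPolynomial.X 0)

/-- The image `v` of the second variable in `B`. -/
def vElt (A : Type) [CommRing A] (n : ℕ) (F a : A) : DihedralCoverRing A n F a :=
  Ideal.Quotient.mk _ (MvPolynomial.X 1)

/-!
STATEMENT 8: Let `A` be a commutative ring, `n ≥ 1` an integer, `F, a ∈ A`, and `ζ ∈ A`
an invertible element with `ζⁿ = 1`.  Let `B := A[u, v]/(uv − F, uⁿ + vⁿ − 2a)`.  Then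
there exist (unique) `A`-algebra automorphisms `σ` and `τ` of `B` with `σ(u) = ζ·u`,
`σ(v) = ζ⁻¹·v`, `τ(u) = v`, `τ(v) = u`, and they satisfy the dihedral relations `σⁿ = id`,
`τ² = id` and `(σ∘τ)² = id`; in particular `σ` and `τ` generate an action of the dihedral
group `Dₙ` on `B` by `A`-algebra automorphisms.
-/

/-!
A pair `(x, y)` in a commutative `A`-algebra with `x * y = F` and `xⁿ + yⁿ = 2a` determines a
unique `A`-algebra map out of `B` sending `u ↦ x`, `v ↦ y`. Because `ζⁿ = 1`, the pairs
`(ζu, ζ⁻¹v)` and `(v, u)` qualify; this makes `ζ ↦ σ_ζ` a homomorphism from the `n`-th roots of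
unity to `Aut_A B`, `τ` an involution, and `τ σ_ζ τ = σ_ζ⁻¹`. These are exactly the relations
`rⁿ = s² = (rs)² = 1` presenting `Dₙ`.
-/

namespace DihedralGroup

variable {n : ℕ} {G : Type*} [Group G] {s t : G}

theorem zpow_cast_intCast (hs : s ^ n = 1) (k : ℤ) :
    s ^ (((k : ZMod n).cast : ℤ)) = s ^ k := by
  refine zpow_eq_zpow_iff_modEq.2 (Int.ModEq.of_dvd (n := n) ?_ ?_)
  · exact Int.natCast_dvd_natCast.2 (orderOf_dvd_of_pow_eq_one hs)
  · exact (ZMod.intCast_eq_intCast_iff _ _ n).1 (ZMod.intCast_zmod_cast _)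

theorem mul_zpow_eq_zpow_neg_mul (ht : t ^ 2 = 1) (hst : (s * t) ^ 2 = 1) (k : ℤ) :
    t * s ^ k = s ^ (-k) * t := by
  have ht' : t⁻¹ = t := inv_eq_of_mul_eq_one_right (by rw [← sq, ht])
  have hconj : t * s * t⁻¹ = s⁻¹ := by
    refine eq_inv_of_mul_eq_one_right ?_
    rw [ht', ← hst, sq]
    simp only [mul_assoc]
  rw [zpow_neg, ← inv_zpow, ← hconj, conj_zpow, ht', mul_assoc, ← sq, ht, mul_one]

def lift (s t : G) (hs : s ^ n = 1) (ht : t ^ 2 = 1) (hst : (s * t) ^ 2 = 1) :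
    DihedralGroup n →* G where
  toFun
    | r i => s ^ (i.cast : ℤ)
    | sr i => t * s ^ (i.cast : ℤ)
  map_one' := by simp [← r_zero]
  map_mul' := by
    rintro (i | i) (j | j) <;>
    obtain ⟨i, rfl⟩ := ZMod.intCast_surjective i <;>
    obtain ⟨j, rfl⟩ := ZMod.intCast_surjective j <;>
    simp only [r_mul_r, r_mul_sr, sr_mul_r, sr_mul_sr, ← Int.cast_add, ← Int.cast_sub,
      zpow_cast_intCast hs]
    · exact zpow_add s i j
    · rw [mul_zpow_eq_zpow_neg_mul ht hst, mul_zpow_eq_zpow_neg_mul ht hst, ← mul_assoc,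
        ← zpow_add, neg_sub, sub_eq_add_neg]
    · rw [zpow_add, mul_assoc]
    · rw [mul_zpow_eq_zpow_neg_mul ht hst, mul_assoc, ← mul_assoc t, ← sq, ht, one_mul,
        ← zpow_add, neg_add_eq_sub]

section lift

variable (hs : s ^ n = 1) (ht : t ^ 2 = 1) (hst : (s * t) ^ 2 = 1)

@[simp]
theorem lift_r_one : lift s t hs ht hst (r 1) = s := by
  change s ^ (((1 : ZMod n).cast : ℤ)) = s
  rw [← Int.cast_one, zpow_cast_intCast hs, zpow_one]

@[simp]
theorem lift_sr_zero : lift s t hs ht hst (sr 0) = t := by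
  change t * s ^ (((0 : ZMod n).cast : ℤ)) = t
  rw [ZMod.cast_zero, zpow_zero, mul_one]

end lift

end DihedralGroup

namespace DihedralCoverRing

open MvPolynomial

variable (A : Type) [CommRing A] (n : ℕ) (F a : A)

theorem uElt_mul_vElt :
    uElt A n F a * vElt A n F a = algebraMap A (DihedralCoverRing A n F a) F := by
  rw [← sub_eq_zero, ← Ideal.Quotient.mk_algebraMap, uElt, vElt, ← map_mul, ← map_sub,
    Ideal.Quotient.eq_zero_iff_mem, algebraMap_eq]
  exact Ideal.subset_span (Or.inl rfl)

theorem uElt_pow_add_vElt_pow :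
    uElt A n F a ^ n + vElt A n F a ^ n
      = algebraMap A (DihedralCoverRing A n F a) (2 * a) := by
  rw [← sub_eq_zero, ← Ideal.Quotient.mk_algebraMap, uElt, vElt, ← map_pow, ← map_pow,
    ← map_add, ← map_sub, Ideal.Quotient.eq_zero_iff_mem, algebraMap_eq]
  exact Ideal.subset_span (Or.inr rfl)

variable {A n F a}

theorem algHom_ext {C : Type*} [Semiring C] [Algebra A C]
    {f g : DihedralCoverRing A n F a →ₐ[A] C}
    (hu : f (uElt A n F a) = g (uElt A n F a)) (hv : f (vElt A n F a) = g (vElt A n F a)) :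
    f = g := by
  refine Ideal.Quotient.algHom_ext A (MvPolynomial.algHom_ext fun i => ?_)
  fin_cases i
  exacts [hu, hv]

theorem algEquiv_ext {C : Type*} [Semiring C] [Algebra A C]
    {f g : DihedralCoverRing A n F a ≃ₐ[A] C}
    (hu : f (uElt A n F a) = g (uElt A n F a)) (hv : f (vElt A n F a) = g (vElt A n F a)) :
    f = g :=
  AlgEquiv.coe_toAlgHom_injective (algHom_ext hu hv)

variable (A n F a) in
def lift {C : Type*} [CommRing C] [Algebra A C] (x y : C)
    (hxy : x * y = algebraMap A C F) (hsum : x ^ n + y ^ n = algebraMap A C (2 * a)) :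
    DihedralCoverRing A n F a →ₐ[A] C :=
  Ideal.Quotient.liftₐ _ (aeval ![x, y]) fun p hp => by
    refine (Ideal.span_le.2 ?_ : dihedralIdeal A n F a ≤ RingHom.ker (aeval ![x, y])) hp
    rintro q (rfl | rfl) <;> simp [hxy, hsum]

section lift

variable {C : Type*} [CommRing C] [Algebra A C] {x y : C}
  (hxy : x * y = algebraMap A C F) (hsum : x ^ n + y ^ n = algebraMap A C (2 * a))

@[simp]
theorem lift_uElt : lift A n F a x y hxy hsum (uElt A n F a) = x :=
  aeval_X ![x, y] 0

@[simp]
theorem lift_vElt : lift A n F a x y hxy hsum (vElt A n F a) = y :=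
  aeval_X ![x, y] 1

end lift

variable (A n F a)

def rotateEnd :
    rootsOfUnity n A →* (DihedralCoverRing A n F a →ₐ[A] DihedralCoverRing A n F a) where
  toFun ζ :=
    lift A n F a (((ζ : Aˣ) : A) • uElt A n F a) ((((ζ : Aˣ)⁻¹ : Aˣ) : A) • vElt A n F a)
      (by rw [smul_mul_smul_comm, Units.mul_inv, one_smul, uElt_mul_vElt])
      (by
        rw [smul_pow, smul_pow, ← Units.val_pow_eq_pow_val, ← Units.val_pow_eq_pow_val, inv_pow,
          (mem_rootsOfUnity n _).1 ζ.2, inv_one, Units.val_one, one_smul, one_smul,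
          uElt_pow_add_vElt_pow])
  map_one' := algHom_ext (by simp) (by simp)
  map_mul' ζ η := algHom_ext (by simp [smul_smul, mul_comm]) (by simp [smul_smul, mul_comm])

def rotate :
    rootsOfUnity n A →* (DihedralCoverRing A n F a ≃ₐ[A] DihedralCoverRing A n F a) :=
  (AlgEquiv.algHomUnitsEquiv A _).toMonoidHom.comp (rotateEnd A n F a).toHomUnits

def swap : DihedralCoverRing A n F a ≃ₐ[A] DihedralCoverRing A n F a :=
  let τ := lift A n F a (vElt A n F a) (uElt A n F a)
    (by rw [mul_comm, uElt_mul_vElt]) (by rw [add_comm, uElt_pow_add_vElt_pow])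
  have hτ : τ.comp τ = AlgHom.id A _ := algHom_ext (by simp [τ]) (by simp [τ])
  AlgEquiv.ofAlgHom τ τ hτ hτ

variable {A n F a}

section rotate

variable (ζ : rootsOfUnity n A)

@[simp]
theorem rotate_uElt : rotate A n F a ζ (uElt A n F a) = ((ζ : Aˣ) : A) • uElt A n F a := by
  simp [rotate, rotateEnd]

@[simp]
theorem rotate_vElt :
    rotate A n F a ζ (vElt A n F a) = (((ζ : Aˣ)⁻¹ : Aˣ) : A) • vElt A n F a := by
  simp [rotate, rotateEnd]

end rotate

@[simp]
theorem swap_uElt : swap A n F a (uElt A n F a) = vElt A n F a := by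
  simp [swap]

@[simp]
theorem swap_vElt : swap A n F a (vElt A n F a) = uElt A n F a := by
  simp [swap]

theorem swap_mul_swap : swap A n F a * swap A n F a = 1 :=
  algEquiv_ext (by simp) (by simp)

theorem swap_mul_rotate (ζ : rootsOfUnity n A) :
    swap A n F a * rotate A n F a ζ = rotate A n F a ζ⁻¹ * swap A n F a :=
  algEquiv_ext (by simp [-map_inv]) (by simp [-map_inv])

end DihedralCoverRing

open DihedralCoverRing

theorem dihedralCoverRing_dihedral_action_general
    (A : Type) [CommRing A] (n : ℕ) (F a : A)
    (ζ : Aˣ) (hζ : ζ ^ n = 1) :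
    ∃ σ τ : DihedralCoverRing A n F a ≃ₐ[A] DihedralCoverRing A n F a,
      σ (uElt A n F a) = (ζ : A) • uElt A n F a ∧
      σ (vElt A n F a) = ((ζ⁻¹ : Aˣ) : A) • vElt A n F a ∧
      τ (uElt A n F a) = vElt A n F a ∧
      τ (vElt A n F a) = uElt A n F a ∧
      (∀ σ' : DihedralCoverRing A n F a ≃ₐ[A] DihedralCoverRing A n F a,
        σ' (uElt A n F a) = (ζ : A) • uElt A n F a →
        σ' (vElt A n F a) = ((ζ⁻¹ : Aˣ) : A) • vElt A n F a → σ' = σ) ∧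
      (∀ τ' : DihedralCoverRing A n F a ≃ₐ[A] DihedralCoverRing A n F a,
        τ' (uElt A n F a) = vElt A n F a →
        τ' (vElt A n F a) = uElt A n F a → τ' = τ) ∧
      σ ^ n = 1 ∧ τ ^ 2 = 1 ∧ (σ * τ) ^ 2 = 1 ∧
      ∃ ρ : DihedralGroup n →*
          (DihedralCoverRing A n F a ≃ₐ[A] DihedralCoverRing A n F a),
        ρ (DihedralGroup.r 1) = σ ∧ ρ (DihedralGroup.sr 0) = τ := by
  let ζ' : rootsOfUnity n A := ⟨ζ, (mem_rootsOfUnity n ζ).2 hζ⟩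
  set σ := rotate A n F a ζ'
  set τ := swap A n F a
  have hσ : σ ^ n = 1 := by rw [← map_pow, show ζ' ^ n = 1 from Subtype.ext hζ, map_one]
  have hτ : τ ^ 2 = 1 := (sq τ).trans swap_mul_swap
  have hστ : (σ * τ) ^ 2 = 1 := by
    rw [sq, mul_assoc, ← mul_assoc τ, swap_mul_rotate, map_inv, ← mul_assoc,
      mul_inv_cancel_left, swap_mul_swap]
  refine ⟨σ, τ, rotate_uElt ζ', rotate_vElt ζ', swap_uElt, swap_vElt,
    fun _ hu hv =>
      algEquiv_ext (hu.trans (rotate_uElt ζ').symm) (hv.trans (rotate_vElt ζ').symm),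
    fun _ hu hv => algEquiv_ext (hu.trans swap_uElt.symm) (hv.trans swap_vElt.symm),
    hσ, hτ, hστ, DihedralGroup.lift σ τ hσ hτ hστ, DihedralGroup.lift_r_one ..,
    DihedralGroup.lift_sr_zero ..⟩

theorem dihedralCoverRing_dihedral_action
    (A : Type) [CommRing A] (n : ℕ) (hn : 1 ≤ n) (F a : A)
    (ζ : Aˣ) (hζ : ζ ^ n = 1) :
    ∃ σ τ : DihedralCoverRing A n F a ≃ₐ[A] DihedralCoverRing A n F a,
      σ (uElt A n F a) = (ζ : A) • uElt A n F a ∧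
      σ (vElt A n F a) = ((ζ⁻¹ : Aˣ) : A) • vElt A n F a ∧
      τ (uElt A n F a) = vElt A n F a ∧
      τ (vElt A n F a) = uElt A n F a ∧
      (∀ σ' : DihedralCoverRing A n F a ≃ₐ[A] DihedralCoverRing A n F a,
        σ' (uElt A n F a) = (ζ : A) • uElt A n F a →
        σ' (vElt A n F a) = ((ζ⁻¹ : Aˣ) : A) • vElt A n F a → σ' = σ) ∧
      (∀ τ' : DihedralCoverRing A n F a ≃ₐ[A] DihedralCoverRing A n F a,
        τ' (uElt A n F a) = vElt A n F a →
        τ' (vElt A n F a) = uElt A n F a → τ' = τ) ∧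
      σ ^ n = 1 ∧ τ ^ 2 = 1 ∧ (σ * τ) ^ 2 = 1 ∧
      ∃ ρ : DihedralGroup n →*
          (DihedralCoverRing A n F a ≃ₐ[A] DihedralCoverRing A n F a),
        ρ (DihedralGroup.r 1) = σ ∧ ρ (DihedralGroup.sr 0) = τ :=
  dihedralCoverRing_dihedral_action_general A n F a ζ hζ
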